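/- For the product of exponentials f(q) = exp(Y₁q₁)·…·exp(Yₙqₙ) with joint screws Sᵢ(q) = Ad_{gᵢ(q)} Yᵢ, where gᵢ(q) = exp(Y₁q₁)·…·exp(Yᵢqᵢ), the partial derivative satisfies ∂Sᵢ/∂q_j = [S_j, Sᵢ] (the matrix commutator / Lie bracket) for j < i, and ∂Sᵢ/∂q_j = 0 for j ≥ i. -/

import Mathlib

/-- Partial derivative of a scalar function on `ℝⁿ` with respect to the `j`-th coordinate. -/
noncomputable def partialDeriv {n : ℕ} (j : Fin n) (F : (Fin n → ℝ) → ℝ)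
    (q : Fin n → ℝ) : ℝ :=
  deriv (fun s => F (Function.update q j s)) (q j)

/-- `gᵢ(q) = exp(Y₁q₁)⋯exp(Yᵢqᵢ)` (0-indexed, `i` inclusive). -/
noncomputable def poePartial {m n : ℕ} (Y : Fin n → Matrix (Fin m) (Fin m) ℝ)
    (i : Fin n) (q : Fin n → ℝ) : Matrix (Fin m) (Fin m) ℝ :=
  ((List.ofFn fun j : Fin n => NormedSpace.exp (q j • Y j)).take ((i : ℕ) + 1)).prod

/-- The instantaneous joint screw `Sᵢ(q) = Ad_{gᵢ(q)} Yᵢ = gᵢ(q)·Yᵢ·gᵢ(q)⁻¹`. -/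
noncomputable def poeScrew {m n : ℕ} (Y : Fin n → Matrix (Fin m) (Fin m) ℝ)
    (i : Fin n) (q : Fin n → ℝ) : Matrix (Fin m) (Fin m) ℝ :=
  poePartial Y i q * Y i * (poePartial Y i q)⁻¹

/-!
Let `gₜ` be the product of the first `t` exponentials. Since the last factor `e^{qᵢ Yᵢ}` of the
paper's `gᵢ` commutes with `Yᵢ`, also `Sᵢ = gᵢ Yᵢ gᵢ⁻¹` in this notation. For `j < t`,
replacing `q_j` by `s` turns `gₜ` into `g_j e^{(s - q_j) Y_j} g_j⁻¹ gₜ = e^{(s - q_j) S_j} gₜ`.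
So for `j < i`, varying `q_j` conjugates `Sᵢ` by the one-parameter group `e^{(s - q_j) S_j}`,
whose derivative at `s = q_j` is `[S_j, Sᵢ]`; for `j ≥ i`, `Sᵢ` does not involve `q_j` at all.
-/

open NormedSpace Function

theorem hasDerivAt_exp_smul_mul_mul_exp_smul_neg {𝕂 𝔸 : Type*} [RCLike 𝕂] [NormedRing 𝔸]
    [NormedAlgebra 𝕂 𝔸] [CompleteSpace 𝔸] (X C : 𝔸) :
    HasDerivAt (fun u : 𝕂 => exp (u • X) * C * exp (u • -X)) (X * C - C * X) 0 := by
  have h := ((hasDerivAt_exp_smul_const X (0 : 𝕂)).mul_const C).mul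
    (hasDerivAt_exp_smul_const (-X) (0 : 𝕂))
  exact h.congr_deriv (by simp [sub_eq_add_neg])

section PartialDeriv

variable {m n : ℕ} {F : (Fin n → ℝ) → Matrix (Fin m) (Fin m) ℝ} {j : Fin n} {q : Fin n → ℝ}

theorem partialDeriv_entries_eq_zero_of_update_eq (hF : ∀ s, F (update q j s) = F q) :
    (Matrix.of fun a b => partialDeriv j (fun p => F p a b) q) = 0 := by
  ext a b
  simp only [Matrix.of_apply, Matrix.zero_apply, partialDeriv, hF, deriv_const]

attribute [local instance] Matrix.linftyOpNormedRing Matrix.linftyOpNormedAlgebra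

theorem partialDeriv_entries_eq_of_hasDerivAt {M : Matrix (Fin m) (Fin m) ℝ}
    (hF : HasDerivAt (fun s => F (update q j s)) M (q j)) :
    (Matrix.of fun a b => partialDeriv j (fun p => F p a b) q) = M := by
  ext a b
  exact ((Matrix.entryLinearMap ℝ ℝ a b).toContinuousLinearMap.hasFDerivAt.comp_hasDerivAt
    _ hF).deriv

theorem partialDeriv_entries_eq_commutator_of_update_eq_conj_exp {X C : Matrix (Fin m) (Fin m) ℝ}
    (hF : ∀ s, F (update q j s) = exp ((s - q j) • X) * C * exp ((s - q j) • -X)) :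
    (Matrix.of fun a b => partialDeriv j (fun p => F p a b) q) = X * C - C * X := by
  apply partialDeriv_entries_eq_of_hasDerivAt
  simp only [hF]
  have h := hasDerivAt_exp_smul_mul_mul_exp_smul_neg (𝕂 := ℝ) X C
  rw [← sub_self (q j)] at h
  exact h.comp_sub_const _ _

end PartialDeriv

section PrefixProduct

variable {m n : ℕ} (Y : Fin n → Matrix (Fin m) (Fin m) ℝ)

noncomputable def poePrefix (q : Fin n → ℝ) (t : ℕ) : Matrix (Fin m) (Fin m) ℝ :=
  ((List.ofFn fun k : Fin n => exp (q k • Y k)).take t).prod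

@[simp]
theorem poePrefix_zero (q : Fin n → ℝ) : poePrefix Y q 0 = 1 := by
  simp [poePrefix]

theorem poePrefix_succ (q : Fin n → ℝ) {t : ℕ} (ht : t < n) :
    poePrefix Y q (t + 1) = poePrefix Y q t * exp (q ⟨t, ht⟩ • Y ⟨t, ht⟩) := by
  rw [poePrefix, List.prod_take_succ _ _ (by simpa using ht)]
  simp [poePrefix]

theorem poePrefix_succ_of_le (q : Fin n → ℝ) {t : ℕ} (ht : n ≤ t) :
    poePrefix Y q (t + 1) = poePrefix Y q t := by
  rw [poePrefix, poePrefix, List.take_of_length_le (by simp; omega),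
    List.take_of_length_le (by simpa using ht)]

theorem poePartial_eq_poePrefix_mul (i : Fin n) (q : Fin n → ℝ) :
    poePartial Y i q = poePrefix Y q i * exp (q i • Y i) :=
  poePrefix_succ Y q i.isLt

theorem isUnit_poePrefix (q : Fin n → ℝ) (t : ℕ) : IsUnit (poePrefix Y q t) := by
  refine List.prod_isUnit fun M hM => ?_
  obtain ⟨k, rfl⟩ := List.mem_ofFn.mp (List.mem_of_mem_take hM)
  exact Matrix.isUnit_exp _

theorem poePrefix_congr {q q' : Fin n → ℝ} {t : ℕ} (h : ∀ k : Fin n, (k : ℕ) < t → q k = q' k) :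
    poePrefix Y q t = poePrefix Y q' t := by
  induction t with
  | zero => simp
  | succ t ih =>
    have ih := ih fun k hk => h k (by omega)
    rcases lt_or_ge t n with ht | ht
    · rw [poePrefix_succ Y q ht, poePrefix_succ Y q' ht, ih, h _ (by simp)]
    · rw [poePrefix_succ_of_le Y q ht, poePrefix_succ_of_le Y q' ht, ih]

theorem poeScrew_eq_poePrefix_conj (i : Fin n) (q : Fin n → ℝ) :
    poeScrew Y i q = poePrefix Y q i * Y i * (poePrefix Y q i)⁻¹ := by
  have hE : IsUnit (exp (q i • Y i)).det :=
    (Matrix.isUnit_iff_isUnit_det _).mp (Matrix.isUnit_exp _)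
  have hcomm : exp (q i • Y i) * Y i = Y i * exp (q i • Y i) :=
    ((Commute.refl (Y i)).smul_left (q i)).exp_left.eq
  rw [poeScrew, poePartial_eq_poePrefix_mul, Matrix.mul_inv_rev, mul_assoc (poePrefix Y q i),
    hcomm, ← mul_assoc, ← mul_assoc, Matrix.mul_nonsing_inv_cancel_right _ _ hE, mul_assoc]

theorem poePrefix_update {q : Fin n → ℝ} {j : Fin n} (s : ℝ) {t : ℕ} (hjt : (j : ℕ) < t) :
    poePrefix Y (update q j s) t = exp ((s - q j) • poeScrew Y j q) * poePrefix Y q t := by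
  induction t, hjt using Nat.le_induction with
  | base =>
    have hdet := (Matrix.isUnit_iff_isUnit_det _).mp (isUnit_poePrefix Y q j)
    have hbelow : poePrefix Y (update q j s) j = poePrefix Y q j :=
      poePrefix_congr Y fun k hk => update_of_ne (Fin.ne_of_lt hk) _ _
    rw [poePrefix_succ Y _ j.isLt, poePrefix_succ Y _ j.isLt, Fin.eta, update_self, hbelow,
      poeScrew_eq_poePrefix_conj, ← smul_mul_assoc, ← mul_smul_comm,
      Matrix.exp_conj _ _ (isUnit_poePrefix Y q j), mul_assoc _ (poePrefix Y q j)⁻¹,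
      Matrix.nonsing_inv_mul_cancel_left _ _ hdet, mul_assoc,
      ← Matrix.exp_add_of_commute _ _ (((Commute.refl (Y j)).smul_left _).smul_right _),
      ← add_smul, sub_add_cancel]
  | succ t hjt ih =>
    rcases lt_or_ge t n with ht | ht
    · rw [poePrefix_succ Y _ ht, poePrefix_succ Y _ ht, ih,
        update_of_ne (Fin.ne_of_gt (show j < ⟨t, ht⟩ from hjt)), mul_assoc]
    · rw [poePrefix_succ_of_le Y _ ht, poePrefix_succ_of_le Y _ ht, ih]

theorem poeScrew_update_of_lt {i j : Fin n} (q : Fin n → ℝ) (hji : j < i) (s : ℝ) :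
    poeScrew Y i (update q j s) =
      exp ((s - q j) • poeScrew Y j q) * poeScrew Y i q * exp ((s - q j) • -poeScrew Y j q) := by
  rw [poeScrew_eq_poePrefix_conj, poeScrew_eq_poePrefix_conj Y i q, poePrefix_update Y s hji,
    Matrix.mul_inv_rev, smul_neg, Matrix.exp_neg]
  simp only [mul_assoc]

theorem poeScrew_update_of_le {i j : Fin n} (q : Fin n → ℝ) (hij : i ≤ j) (s : ℝ) :
    poeScrew Y i (update q j s) = poeScrew Y i q := by
  rw [poeScrew_eq_poePrefix_conj, poeScrew_eq_poePrefix_conj,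
    poePrefix_congr Y fun k hk => update_of_ne (Fin.ne_of_lt (lt_of_lt_of_le hk hij)) s q]

end PrefixProduct

/-- `∂Sᵢ/∂q_j = [S_j, Sᵢ]` for `j < i`, and `∂Sᵢ/∂q_j = 0` for `j ≥ i`
(entrywise partial derivatives). -/
theorem poeScrew_partialDeriv {m n : ℕ}
    (Y : Fin n → Matrix (Fin m) (Fin m) ℝ) (i j : Fin n) (q : Fin n → ℝ) :
    (j < i →
      (Matrix.of fun a b => partialDeriv j (fun p => poeScrew Y i p a b) q) =
        poeScrew Y j q * poeScrew Y i q - poeScrew Y i q * poeScrew Y j q) ∧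
    (i ≤ j →
      (Matrix.of fun a b => partialDeriv j (fun p => poeScrew Y i p a b) q) = 0) :=
  ⟨fun hji =>
    partialDeriv_entries_eq_commutator_of_update_eq_conj_exp (poeScrew_update_of_lt Y q hji),
  fun hij => partialDeriv_entries_eq_zero_of_update_eq (poeScrew_update_of_le Y q hij)⟩
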